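/- Let $d \ge 1$ and $0 \le k \le d$ be integers. Then $\sum_{s=0}^{k} \dfrac{v^{(1-d)(d-s)} \prod_{j=d-s+1}^{d}(v^j + v^{-j})}{[s]!} (v - v^{-1})^{d-s} = v^{d(k+1-d)} (v - v^{-1})^{d-k} \dfrac{\prod_{j=d-k}^{d-1}(v^j + v^{-j})}{[k]!}$ holds in $\mathbb{Q}(v)$. -/

import Mathlib

/-! Induction on `k`. Adding the `(k+1)`-st summand to the closed form for `k` and clearing the
common factor `(v - v⁻¹)^(d-k-1) ∏_{j=d-k}^{d-1} (v^j + v^{-j}) / [k+1]!` leaves, since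
`(v - v⁻¹) [k+1] = v^{k+1} - v^{-(k+1)}`, a three-term identity between Laurent monomials in `v`
(`zpow_identity`). Only the nonvanishing of `v - v⁻¹` and of the quantum integers is needed,
which holds because `v` is transcendental over `ℚ`. -/

noncomputable section

abbrev K : Type := RatFunc ℚ

/-- The indeterminate `v` in `ℚ(v)`. -/
def v : K := RatFunc.X

/-- Quantum integer `[m] = (v^m - v^{-m})/(v - v^{-1})`. -/
def qint (m : ℤ) : K := (v ^ m - v ^ (-m)) / (v - v⁻¹)

/-- Quantum factorial `[r]! = ∏_{i=1}^r [i]`. -/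
def qfact (r : ℕ) : K := ∏ i ∈ Finset.range r, qint ((i : ℤ) + 1)

/-- Quantum double factorial `[2r]!! = ∏_{i=1}^r [2i]`. -/
def qdfact (r : ℕ) : K := ∏ i ∈ Finset.range r, qint (2 * ((i : ℤ) + 1))

/-- Balanced Gaussian binomial coefficient `[m][m-1]⋯[m-r+1]/[r]!`. -/
def qbinom (m : ℤ) (r : ℕ) : K := (∏ i ∈ Finset.range r, qint (m - (i : ℤ))) / qfact r

/-- Gaussian binomial with integer lower index, vanishing for negative lower index. -/
def qbinomZ (m r : ℤ) : K := if 0 ≤ r then qbinom m r.toNat else 0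

lemma v_ne_zero : v ≠ 0 := RatFunc.X_ne_zero

lemma v_zpow_ne_one {n : ℤ} (hn : n ≠ 0) : v ^ n ≠ 1 := by
  have htr : Transcendental ℚ (v ^ n.natAbs) := by
    -- `K` carries two `ℚ`-algebra structures (via `ℚ[X]` and via `DivisionRing`); they agree.
    convert RatFunc.transcendental_X.pow (Int.natAbs_pos.mpr hn)
    exacts [Subsingleton.elim _ _, rfl]
  intro h
  rcases Int.natAbs_eq n with e | e
  · rw [e, zpow_natCast] at h
    exact htr (h ▸ isAlgebraic_one)
  · rw [e, zpow_neg, zpow_natCast, inv_eq_one] at h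
    exact htr (h ▸ isAlgebraic_one)

lemma v_zpow_sub_zpow_neg_ne_zero {m : ℤ} (hm : m ≠ 0) : v ^ m - v ^ (-m) ≠ 0 := by
  rw [sub_ne_zero, Ne, ← mul_inv_eq_one₀ (zpow_ne_zero _ v_ne_zero), ← zpow_neg, neg_neg,
    ← zpow_add₀ v_ne_zero]
  exact v_zpow_ne_one (by omega)

lemma v_sub_v_inv_ne_zero : v - v⁻¹ ≠ 0 := by
  simpa using v_zpow_sub_zpow_neg_ne_zero one_ne_zero

lemma qint_ne_zero {m : ℤ} (hm : m ≠ 0) : qint m ≠ 0 :=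
  div_ne_zero (v_zpow_sub_zpow_neg_ne_zero hm) v_sub_v_inv_ne_zero

lemma qfact_ne_zero (r : ℕ) : qfact r ≠ 0 :=
  Finset.prod_ne_zero_iff.mpr fun _ _ => qint_ne_zero (by omega)

lemma qfact_succ (r : ℕ) : qfact (r + 1) = qfact r * qint ((r : ℤ) + 1) :=
  Finset.prod_range_succ _ _

lemma v_sub_v_inv_mul_qint (m : ℤ) : (v - v⁻¹) * qint m = v ^ m - v ^ (-m) :=
  mul_div_cancel₀ _ v_sub_v_inv_ne_zero

lemma zpow_identity {F : Type*} [Field F] {x : F} (hx : x ≠ 0) {d k m : ℤ} (h : d = m + k + 1) :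
    x ^ (d * (k + 1 - d)) * (x ^ (k + 1) - x ^ (-(k + 1)))
      + x ^ ((1 - d) * (d - (k + 1))) * (x ^ d + x ^ (-d))
    = x ^ (d * (k + 1 + 1 - d)) * (x ^ m + x ^ (-m)) := by
  subst h
  simp only [mul_sub, mul_add, ← zpow_add₀ hx]
  ring_nf

def summand (d s : ℕ) : K :=
  v ^ ((1 - (d : ℤ)) * ((d : ℤ) - s)) *
    (∏ j ∈ Finset.Icc (d - s + 1) d, (v ^ (j : ℤ) + v ^ (-(j : ℤ)))) / qfact s *
    (v - v⁻¹) ^ (d - s)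

def closedForm (d k : ℕ) : K :=
  v ^ ((d : ℤ) * ((k : ℤ) + 1 - d)) * (v - v⁻¹) ^ (d - k) *
    (∏ j ∈ Finset.Icc (d - k) (d - 1), (v ^ (j : ℤ) + v ^ (-(j : ℤ)))) / qfact k

lemma summand_zero {d : ℕ} (hd : 1 ≤ d) : summand d 0 = closedForm d 0 := by
  rw [summand, closedForm, Finset.Icc_eq_empty (by omega), Finset.Icc_eq_empty (by omega)]
  ring_nf

lemma closedForm_add_summand {d k : ℕ} (hk : k + 1 ≤ d) :
    closedForm d k + summand d (k + 1) = closedForm d (k + 1) := by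
  obtain ⟨m, rfl⟩ : ∃ m, d = m + k + 1 := ⟨d - k - 1, by omega⟩
  simp only [closedForm, summand, qfact_succ]
  rw [show m + k + 1 - k = m + 1 by omega, show m + k + 1 - (k + 1) = m by omega,
    show m + k + 1 - 1 = m + k by omega, Finset.prod_Icc_succ_top (by omega),
    Finset.Icc_eq_cons_Ioc (by omega : m ≤ m + k), Finset.prod_cons,
    ← Finset.Icc_add_one_left_eq_Ioc]
  generalize ∏ j ∈ Finset.Icc (m + 1) (m + k), (v ^ (j : ℤ) + v ^ (-(j : ℤ))) = P
  have key := zpow_identity v_ne_zero (d := (m + k + 1 : ℕ)) (k := k) (m := m) (by push_cast; ring)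
  rw [← v_sub_v_inv_mul_qint] at key
  push_cast at key ⊢
  have hq := qint_ne_zero (by omega : (k : ℤ) + 1 ≠ 0)
  have hQ := qfact_ne_zero k
  generalize v - v⁻¹ = W at key ⊢
  field_simp
  linear_combination (W ^ m * P) * key

theorem stmt6 (d k : ℕ) (hd : 1 ≤ d) (hk : k ≤ d) :
    ∑ s ∈ Finset.range (k + 1),
      v ^ ((1 - (d : ℤ)) * ((d : ℤ) - s)) *
        (∏ j ∈ Finset.Icc (d - s + 1) d, (v ^ (j : ℤ) + v ^ (-(j : ℤ)))) / qfact s *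
        (v - v⁻¹) ^ (d - s)
    = v ^ ((d : ℤ) * ((k : ℤ) + 1 - d)) * (v - v⁻¹) ^ (d - k) *
        (∏ j ∈ Finset.Icc (d - k) (d - 1), (v ^ (j : ℤ) + v ^ (-(j : ℤ)))) / qfact k := by
  change ∑ s ∈ Finset.range (k + 1), summand d s = closedForm d k
  induction k with
  | zero => rw [Finset.sum_range_one, summand_zero hd]
  | succ k ih => rw [Finset.sum_range_succ, ih (by omega), closedForm_add_summand hk]
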